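/- Fix n ≥ 2 and N ∈ ℕ. The lowest weight space of level N, namely ker(Δ^{(n)}a⁻) ∩ span{h_{m₁} ⊗ ⋯ ⊗ h_{m_n} : m₁ + ⋯ + m_n = N}, equals span{O₁^{j₁} O₂^{j₂} ⋯ O_{n−1}^{j_{n−1}} v₀ : j_i ∈ ℕ, j₁ + ⋯ + j_{n−1} = N}, and its dimension is the binomial coefficient binom(n+N−2, n−2). -/

import Mathlib

noncomputable section
noncomputable section

/-- The `q`-number `[γ]_q = (q^γ - q^(-γ))/(q - q⁻¹)`. -/
def qnum (q γ : ℝ) : ℝ := (q ^ γ - q ^ (-γ)) / (q - q⁻¹)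

/-- The representation space `H^{(γ,c)}`: finitely supported functions `ℕ → ℂ`. -/
abbrev HO : Type := ℕ →₀ ℂ

/-- The basis vector `h_m`. -/
def hv (m : ℕ) : HO := Finsupp.single m 1

/-- The lowering operator `a⁻ h_m = [γ]_q^{1/2} m^{1/2} h_{m-1}` (so `a⁻ h_0 = 0`). -/
def aMinus (q γ : ℝ) : HO →ₗ[ℂ] HO :=
  Finsupp.lift HO ℂ ℕ fun m => ((Real.sqrt (qnum q γ) * Real.sqrt m : ℝ) : ℂ) • hv (m - 1)

/-- The raising operator `a⁺ h_m = [γ]_q^{1/2} (m+1)^{1/2} h_{m+1}`. -/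
def aPlus (q γ : ℝ) : HO →ₗ[ℂ] HO :=
  Finsupp.lift HO ℂ ℕ fun m => ((Real.sqrt (qnum q γ) * Real.sqrt (m + 1) : ℝ) : ℂ) • hv (m + 1)

/-- The operator `ε h_m = (m + c) h_m`. -/
def epsOp (c : ℝ) : HO →ₗ[ℂ] HO :=
  Finsupp.lift HO ℂ ℕ fun m => (((m : ℝ) + c : ℝ) : ℂ) • hv m

/-- The model of the `n`-fold tensor power `H^{(γ₁,c₁)} ⊗ ⋯ ⊗ H^{(γ_n,c_n)}`: finitely
supported functions on multi-indices, with `h_{m₁} ⊗ ⋯ ⊗ h_{m_n}` the standard basis. -/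
abbrev HN (n : ℕ) : Type := (Fin n → ℕ) →₀ ℂ

/-- The basis vector `h_{m₁} ⊗ ⋯ ⊗ h_{m_n}`. -/
def hN {n : ℕ} (m : Fin n → ℕ) : HN n := Finsupp.single m 1

/-- The iterated coproduct action of `a⁺`:
`Δ^{(n)}a⁺ = Σᵢ q^{−(γ₁+⋯+γ_{i−1})/2} q^{(γ_{i+1}+⋯+γ_n)/2} (1^{⊗ i−1} ⊗ a⁺ ⊗ 1^{⊗ n−i})`. -/
def ΔNaPlus (q : ℝ) {n : ℕ} (γ : Fin n → ℝ) : HN n →ₗ[ℂ] HN n :=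
  Finsupp.lift (HN n) ℂ (Fin n → ℕ) fun m =>
    ∑ i : Fin n,
      ((q ^ (-(∑ j ∈ Finset.Iio i, γ j) / 2) * q ^ ((∑ j ∈ Finset.Ioi i, γ j) / 2) *
          (Real.sqrt (qnum q (γ i)) * Real.sqrt (m i + 1)) : ℝ) : ℂ) •
        hN (Function.update m i (m i + 1))

/-- The iterated coproduct action of `a⁻`:
`Δ^{(n)}a⁻ = Σᵢ q^{−(γ₁+⋯+γ_{i−1})/2} q^{(γ_{i+1}+⋯+γ_n)/2} (1^{⊗ i−1} ⊗ a⁻ ⊗ 1^{⊗ n−i})`. -/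
def ΔNaMinus (q : ℝ) {n : ℕ} (γ : Fin n → ℝ) : HN n →ₗ[ℂ] HN n :=
  Finsupp.lift (HN n) ℂ (Fin n → ℕ) fun m =>
    ∑ i : Fin n,
      ((q ^ (-(∑ j ∈ Finset.Iio i, γ j) / 2) * q ^ ((∑ j ∈ Finset.Ioi i, γ j) / 2) *
          (Real.sqrt (qnum q (γ i)) * Real.sqrt (m i)) : ℝ) : ℂ) •
        hN (Function.update m i (m i - 1))

/-- The iterated coproduct action of `ε`: `Δ^{(n)}ε = Σᵢ 1^{⊗ i−1} ⊗ ε ⊗ 1^{⊗ n−i}`. -/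
def ΔNeps {n : ℕ} (c : Fin n → ℝ) : HN n →ₗ[ℂ] HN n :=
  Finsupp.lift (HN n) ℂ (Fin n → ℕ) fun m =>
    ((∑ i : Fin n, ((m i : ℝ) + c i) : ℝ) : ℂ) • hN m

/-- The `k`-th tensor slot, for `k = 1, …, n−1` (0-indexed). -/
def pos1 {n : ℕ} (k : Fin (n - 1)) : Fin n := ⟨k.1, by have := k.isLt; omega⟩

/-- The `(k+1)`-st tensor slot, for `k = 1, …, n−1` (0-indexed). -/
def pos2 {n : ℕ} (k : Fin (n - 1)) : Fin n := ⟨k.1 + 1, by have := k.isLt; omega⟩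

/-- The ladder operator `O_k = 1^{⊗ k−1} ⊗ O_{(γ_k,γ_{k+1})} ⊗ 1^{⊗ n−k−1}`, where
`O_{(γ,γ')} = q^{−γ/2}[γ]_q^{−1/2}[γ']_q^{1/2}(a⁺ ⊗ 1) − q^{γ'/2}[γ]_q^{1/2}[γ']_q^{−1/2}(1 ⊗ a⁺)`. -/
def ON (q : ℝ) {n : ℕ} (γ : Fin n → ℝ) (k : Fin (n - 1)) : HN n →ₗ[ℂ] HN n :=
  Finsupp.lift (HN n) ℂ (Fin n → ℕ) fun m =>
    ((q ^ (-(γ (pos1 k)) / 2) * (Real.sqrt (qnum q (γ (pos1 k))))⁻¹ *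
        Real.sqrt (qnum q (γ (pos2 k))) *
        (Real.sqrt (qnum q (γ (pos1 k))) * Real.sqrt (m (pos1 k) + 1)) : ℝ) : ℂ) •
        hN (Function.update m (pos1 k) (m (pos1 k) + 1)) -
      ((q ^ (γ (pos2 k) / 2) * Real.sqrt (qnum q (γ (pos1 k))) *
        (Real.sqrt (qnum q (γ (pos2 k))))⁻¹ *
        (Real.sqrt (qnum q (γ (pos2 k))) * Real.sqrt (m (pos2 k) + 1)) : ℝ) : ℂ) •
        hN (Function.update m (pos2 k) (m (pos2 k) + 1))

/-- The monomial `O₁^{j₁} O₂^{j₂} ⋯ O_{n−1}^{j_{n−1}}` (a product of commuting operators). -/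
def Omono (q : ℝ) {n : ℕ} (γ : Fin n → ℝ) (jv : Fin (n - 1) → ℕ) : HN n →ₗ[ℂ] HN n :=
  (List.ofFn fun k : Fin (n - 1) => (ON q γ k) ^ (jv k)).prod

/-!
Write `Δ^{(n)}a⁻ = ∑ᵢ cᵢ Lᵢ` and `O_k = α_k R_k - β_k R_{k+1}`, where `Lᵢ, Rᵢ` are the
normalised lowering and raising operators of slot `i`, so that `[Lᵢ, Rⱼ] = δᵢⱼ`. Then
`[Δ^{(n)}a⁻, O_k]` is the scalar `c_k α_k - c_{k+1} β_k`, which vanishes because the `q`-powers in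
`c_k` and `c_{k+1}` differ exactly by the ones in `α_k` and `β_k`. Hence every `O^j v₀` lies in the
kernel, and it is homogeneous of level `∑ j`.

In the lexicographic order on multi-indices the leading part of `O_k` raises slot `k`, so the
leading index of `O^j v₀` is `(j₁, …, j_{n-1}, 0)` and these vectors are linearly independent.
Conversely, a vector `f` in the kernel is determined by its coefficients at indices with last entry
`0`: the coefficient of `Δ^{(n)}a⁻ f` at `m - e_n` expresses `f m` through coefficients with smaller
last entry. So the dimension is at most the number of `j` with `∑ j = N`, the vectors `O^j v₀` span,
and stars and bars counts them.
-/

open Function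

namespace LowestWeight

lemma linearIndependent_of_leading {ι α β R : Type*} [Ring R] [NoZeroDivisors R]
    [LinearOrder β] {v : ι → α →₀ R} (ℓ : ι → α) (ord : α → β) (hinj : Injective (ord ∘ ℓ))
    (hne : ∀ i, v i (ℓ i) ≠ 0) (hle : ∀ i, ∀ a ∈ (v i).support, ord a ≤ ord (ℓ i)) :
    LinearIndependent R v := by
  classical
  rw [linearIndependent_iff']
  intro s g hg i hi
  by_contra hgi
  obtain ⟨i₀, hi₀, hmax⟩ := (s.filter (g · ≠ 0)).exists_max_image (ord ∘ ℓ)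
    ⟨i, Finset.mem_filter.mpr ⟨hi, hgi⟩⟩
  obtain ⟨hi₀s, hgi₀⟩ := Finset.mem_filter.mp hi₀
  have hcoeff : (∑ i ∈ s, g i • v i) (ℓ i₀) = g i₀ * v i₀ (ℓ i₀) := by
    rw [Finsupp.finsetSum_apply, Finset.sum_eq_single i₀ _ (absurd hi₀s)]
    · rfl
    intro j hj hji₀
    by_cases hgj : g j = 0
    · simp [hgj]
    have hlt : ord (ℓ j) < ord (ℓ i₀) :=
      (hmax j (Finset.mem_filter.mpr ⟨hj, hgj⟩)).lt_of_ne fun h => hji₀ (hinj h)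
    have hvj : v j (ℓ i₀) = 0 := by
      by_contra h
      exact (hle j _ (Finsupp.mem_support_iff.mpr h)).not_gt hlt
    simp [hvj]
  rw [hg] at hcoeff
  exact mul_ne_zero hgi₀ (hne i₀) hcoeff.symm

lemma qnum_pos {q γ : ℝ} (hq0 : 0 < q) (hq1 : q < 1) (hγ : 0 < γ) : 0 < qnum q γ := by
  have hpow : q ^ γ < q ^ (-γ) := Real.rpow_lt_rpow_of_exponent_gt hq0 hq1 (by linarith)
  have hinv : 1 < q⁻¹ := (one_lt_inv₀ hq0).mpr hq1
  exact div_pos_of_neg_of_neg (by linarith) (by linarith)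

lemma sqrt_qnum_pos {q γ : ℝ} (hq0 : 0 < q) (hq1 : q < 1) (hγ : 0 < γ) :
    0 < √(qnum q γ) :=
  Real.sqrt_pos.mpr (qnum_pos hq0 hq1 hγ)

variable {n : ℕ}

lemma update_succ_eq_add_single (m : Fin n → ℕ) (i : Fin n) :
    update m i (m i + 1) = m + Pi.single i 1 := by
  ext j
  by_cases h : j = i <;> simp [h]

lemma update_pred_add_single {m : Fin n → ℕ} {i : Fin n} (h : m i ≠ 0) :
    update m i (m i - 1) + Pi.single i 1 = m := by
  ext j
  by_cases hj : j = i
  · subst hj; simp; omega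
  · simp [hj]

lemma update_add_single_self (μ : Fin n → ℕ) (i : Fin n) :
    update (μ + Pi.single i 1) i (μ i) = μ := by
  ext j
  by_cases h : j = i <;> simp [h]

lemma pos1_injective : Injective (pos1 (n := n)) := fun a b h =>
  Fin.ext (by simpa [pos1] using congrArg Fin.val h)

lemma pos1_lt_pos2 (k : Fin (n - 1)) : pos1 k < pos2 k := by
  simp [pos1, pos2, Fin.lt_def]

lemma Iio_pos2 (k : Fin (n - 1)) : Finset.Iio (pos2 k) = insert (pos1 k) (Finset.Iio (pos1 k)) := by
  ext j
  simp only [Finset.mem_Iio, Finset.mem_insert, Fin.lt_def, Fin.ext_iff, pos1, pos2]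
  omega

lemma Ioi_pos1 (k : Fin (n - 1)) : Finset.Ioi (pos1 k) = insert (pos2 k) (Finset.Ioi (pos2 k)) := by
  ext j
  simp only [Finset.mem_Ioi, Finset.mem_insert, Fin.lt_def, Fin.ext_iff, pos1, pos2]
  omega

lemma toLex_single_lt_single {i j : Fin n} (h : i < j) :
    toLex (Pi.single j 1 : Fin n → ℕ) < toLex (Pi.single i 1) :=
  ⟨i, fun k hk => by simp [hk.ne, (hk.trans h).ne], by simp [h.ne']⟩

lemma hN_ext {f g : HN n →ₗ[ℂ] HN n} (h : ∀ m, f (hN m) = g (hN m)) : f = g :=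
  Finsupp.lhom_ext' fun m => LinearMap.ext_ring (h m)

lemma single_eq_smul_hN (m : Fin n → ℕ) (b : ℂ) : Finsupp.single m b = b • hN m := by
  simp [hN]

lemma lift_hN (F : (Fin n → ℕ) → HN n) (m : Fin n → ℕ) :
    Finsupp.lift (HN n) ℂ (Fin n → ℕ) F (hN m) = F m := by
  simp [hN]

/-- The operator `a⁺` of slot `i` without its factor `[γᵢ]_q^{1/2}`, which is moved into the
coefficients `deltaCoeff`, `ladderCoeff₁`, `ladderCoeff₂`; `lower` is the same for `a⁻`. -/
def raise (i : Fin n) : HN n →ₗ[ℂ] HN n :=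
  Finsupp.lift (HN n) ℂ (Fin n → ℕ) fun m =>
    ((√(m i + 1) : ℝ) : ℂ) • hN (update m i (m i + 1))

def lower (i : Fin n) : HN n →ₗ[ℂ] HN n :=
  Finsupp.lift (HN n) ℂ (Fin n → ℕ) fun m =>
    ((√(m i) : ℝ) : ℂ) • hN (update m i (m i - 1))

lemma raise_hN (i : Fin n) (m : Fin n → ℕ) :
    raise i (hN m) = ((√(m i + 1) : ℝ) : ℂ) • hN (update m i (m i + 1)) :=
  lift_hN _ m

lemma lower_hN (i : Fin n) (m : Fin n → ℕ) :
    lower i (hN m) = ((√(m i) : ℝ) : ℂ) • hN (update m i (m i - 1)) :=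
  lift_hN _ m

lemma lower_raise_hN_self (i : Fin n) (m : Fin n → ℕ) :
    lower i (raise i (hN m)) = ((m i + 1 : ℝ) : ℂ) • hN m := by
  rw [raise_hN, map_smul, lower_hN, smul_smul, update_idem, update_self, Nat.add_sub_cancel,
    update_eq_self, ← Complex.ofReal_mul, Nat.cast_succ, Real.mul_self_sqrt (by positivity)]

lemma raise_lower_hN_self (i : Fin n) (m : Fin n → ℕ) :
    raise i (lower i (hN m)) = ((m i : ℝ) : ℂ) • hN m := by
  rcases Nat.eq_zero_or_pos (m i) with h | h
  · simp [lower_hN, h]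
  · rw [lower_hN, map_smul, raise_hN, smul_smul, update_idem, update_self, Nat.sub_add_cancel h,
      update_eq_self, ← Complex.ofReal_mul, Nat.cast_sub h, Nat.cast_one, sub_add_cancel,
      Real.mul_self_sqrt (by positivity)]

lemma lower_raise_hN_of_ne {i j : Fin n} (h : i ≠ j) (m : Fin n → ℕ) :
    lower i (raise j (hN m)) = raise j (lower i (hN m)) := by
  rw [raise_hN, map_smul, lower_hN, lower_hN, map_smul, raise_hN, update_of_ne h,
    update_of_ne h.symm, update_comm h, smul_smul, smul_smul, mul_comm]

lemma lower_raise (i j : Fin n) (x : HN n) :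
    lower i (raise j x) = raise j (lower i x) + if i = j then x else 0 := by
  split_ifs with h
  · subst h
    have key : lower i ∘ₗ raise i = raise i ∘ₗ lower i + LinearMap.id := hN_ext fun m => by
      rw [LinearMap.comp_apply, LinearMap.add_apply, LinearMap.comp_apply, lower_raise_hN_self,
        raise_lower_hN_self, LinearMap.id_apply, Complex.ofReal_add, Complex.ofReal_one, add_smul,
        one_smul]
    exact LinearMap.congr_fun key x
  · have key : lower i ∘ₗ raise j = raise j ∘ₗ lower i := hN_ext (lower_raise_hN_of_ne h)
    rw [add_zero]
    exact LinearMap.congr_fun key x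

lemma lower_apply (i : Fin n) (f : HN n) (μ : Fin n → ℕ) :
    lower i f μ = ((√(μ i + 1) : ℝ) : ℂ) * f (μ + Pi.single i 1) := by
  induction f using Finsupp.induction_linear with
  | zero => simp
  | add f g hf hg => rw [map_add, Finsupp.add_apply, Finsupp.add_apply, hf, hg, mul_add]
  | single m b =>
    rw [single_eq_smul_hN, map_smul, lower_hN]
    simp only [hN, Finsupp.smul_apply, Finsupp.single_apply, smul_eq_mul]
    by_cases hm : m = μ + Pi.single i 1
    · subst hm
      simp [update_add_single_self, mul_comm]
    · rw [if_neg hm, mul_zero]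
      rcases eq_or_ne (m i) 0 with h | h
      · simp [h]
      · rw [if_neg fun hμ => hm (by rw [← hμ, update_pred_add_single h]), mul_zero,
          mul_zero, mul_zero]

lemma raise_apply_add_single (i : Fin n) (v : HN n) (m : Fin n → ℕ) :
    raise i v (m + Pi.single i 1) = ((√(m i + 1) : ℝ) : ℂ) * v m := by
  induction v using Finsupp.induction_linear with
  | zero => simp
  | add f g hf hg => rw [(raise i).map_add, Finsupp.add_apply, Finsupp.add_apply, hf, hg, mul_add]
  | single m' b =>
    rw [single_eq_smul_hN, map_smul, raise_hN, update_succ_eq_add_single]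
    simp only [hN, Finsupp.smul_apply, Finsupp.single_apply, smul_eq_mul, add_left_inj]
    split_ifs with h
    · subst h; ring
    · simp

lemma raise_support (i : Fin n) (v : HN n) :
    ∀ μ ∈ (raise i v).support, ∃ ν ∈ v.support, μ = ν + Pi.single i 1 := by
  intro μ hμ
  rw [raise, Finsupp.lift_apply] at hμ
  obtain ⟨ν, hν, hμν⟩ := Finset.mem_biUnion.mp (Finsupp.support_sum hμ)
  refine ⟨ν, hν, ?_⟩
  have := Finsupp.support_single_subset
    (Finsupp.support_smul (Finsupp.support_smul hμν))
  rwa [Finset.mem_singleton, update_succ_eq_add_single] at this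

def deltaCoeff (q : ℝ) (γ : Fin n → ℝ) (i : Fin n) : ℝ :=
  q ^ (-(∑ j ∈ Finset.Iio i, γ j) / 2) * q ^ ((∑ j ∈ Finset.Ioi i, γ j) / 2) * √(qnum q (γ i))

/-- The coefficients of `ON` in the unsimplified form of its definition, so that `ON_eq` needs no
positivity; they only simplify (to `q^{-γ_k/2}[γ_{k+1}]_q^{1/2}` and `q^{γ_{k+1}/2}[γ_k]_q^{1/2}`)
once `[γ]_q > 0`. -/
def ladderCoeff₁ (q : ℝ) (γ : Fin n → ℝ) (k : Fin (n - 1)) : ℝ :=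
  q ^ (-(γ (pos1 k)) / 2) * (√(qnum q (γ (pos1 k))))⁻¹ * √(qnum q (γ (pos2 k))) *
    √(qnum q (γ (pos1 k)))

def ladderCoeff₂ (q : ℝ) (γ : Fin n → ℝ) (k : Fin (n - 1)) : ℝ :=
  q ^ (γ (pos2 k) / 2) * √(qnum q (γ (pos1 k))) * (√(qnum q (γ (pos2 k))))⁻¹ *
    √(qnum q (γ (pos2 k)))

lemma ΔNaMinus_eq_sum (q : ℝ) (γ : Fin n → ℝ) :
    ΔNaMinus q γ = ∑ i, (deltaCoeff q γ i : ℂ) • lower i := by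
  refine hN_ext fun m => ?_
  rw [ΔNaMinus, lift_hN, LinearMap.sum_apply]
  refine Finset.sum_congr rfl fun i _ => ?_
  rw [LinearMap.smul_apply, lower_hN, smul_smul, deltaCoeff]
  push_cast
  ring_nf

lemma ON_eq (q : ℝ) (γ : Fin n → ℝ) (k : Fin (n - 1)) :
    ON q γ k = (ladderCoeff₁ q γ k : ℂ) • raise (pos1 k) -
      (ladderCoeff₂ q γ k : ℂ) • raise (pos2 k) := by
  refine hN_ext fun m => ?_
  rw [ON, lift_hN, LinearMap.sub_apply, LinearMap.smul_apply, LinearMap.smul_apply, raise_hN,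
    raise_hN, smul_smul, smul_smul, ladderCoeff₁, ladderCoeff₂]
  push_cast
  ring_nf

lemma lower_ON (q : ℝ) (γ : Fin n → ℝ) (i : Fin n) (k : Fin (n - 1)) (x : HN n) :
    lower i (ON q γ k x) = ON q γ k (lower i x) +
      ((if i = pos1 k then (ladderCoeff₁ q γ k : ℂ) else 0) -
        (if i = pos2 k then (ladderCoeff₂ q γ k : ℂ) else 0)) • x := by
  simp only [ON_eq, LinearMap.sub_apply, LinearMap.smul_apply, map_sub, map_smul, lower_raise]
  split_ifs <;> module

lemma ΔNaMinus_vacuum (q : ℝ) (γ : Fin n → ℝ) : ΔNaMinus q γ (hN fun _ => 0) = 0 := by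
  rw [ΔNaMinus, lift_hN]
  simp

lemma ΔNaMinus_apply (q : ℝ) (γ : Fin n → ℝ) (f : HN n) (μ : Fin n → ℕ) :
    ΔNaMinus q γ f μ =
      ∑ i, (deltaCoeff q γ i : ℂ) * ((√(μ i + 1) : ℝ) : ℂ) * f (μ + Pi.single i 1) := by
  simp only [ΔNaMinus_eq_sum, LinearMap.sum_apply, Finsupp.finsetSum_apply,
    LinearMap.smul_apply, Finsupp.smul_apply, lower_apply, smul_eq_mul, mul_assoc]

lemma eq_zero_of_ΔNaMinus_eq_zero {q : ℝ} {γ : Fin n → ℝ} {i : Fin n} (hi : deltaCoeff q γ i ≠ 0)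
    {f : HN n} (hf : ΔNaMinus q γ f = 0) (h₀ : ∀ m, m i = 0 → f m = 0) : f = 0 := by
  suffices ∀ t m, m i = t → f m = 0 from Finsupp.ext fun m => this _ m rfl
  intro t
  induction t with
  | zero => exact h₀
  | succ t ih =>
    intro m hm
    have hmt : update m i t + Pi.single i 1 = m := by
      have := update_pred_add_single (m := m) (i := i) (by omega)
      rwa [hm, Nat.add_sub_cancel] at this
    have hcoeff := congrArg (· (update m i t)) hf
    simp only [ΔNaMinus_apply, Finsupp.coe_zero, Pi.zero_apply] at hcoeff
    rw [Finset.sum_eq_single i (fun j _ hj => by rw [ih _ (by simp [hj.symm]),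
      mul_zero]) (by simp), hmt, update_self] at hcoeff
    have hsqrt : ((√((t : ℝ) + 1) : ℝ) : ℂ) ≠ 0 :=
      Complex.ofReal_ne_zero.mpr (Real.sqrt_pos.mpr (by positivity)).ne'
    exact (mul_eq_zero.mp hcoeff).resolve_left (mul_ne_zero (Complex.ofReal_ne_zero.mpr hi) hsqrt)

def HasLeading (d : ℕ) (m : Fin n → ℕ) (v : HN n) : Prop :=
  v m ≠ 0 ∧ ∀ μ ∈ v.support, ∑ i, μ i = d ∧ toLex μ ≤ toLex m

lemma HasLeading.smul {d : ℕ} {m : Fin n → ℕ} {v : HN n} (h : HasLeading d m v) {a : ℂ}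
    (ha : a ≠ 0) : HasLeading d m (a • v) :=
  ⟨by simpa using mul_ne_zero ha h.1, fun μ hμ => h.2 μ (Finsupp.support_smul hμ)⟩

lemma HasLeading.sub_of_lt {d : ℕ} {m m' : Fin n → ℕ} {v w : HN n} (hv : HasLeading d m v)
    (hw : HasLeading d m' w) (hlt : toLex m' < toLex m) : HasLeading d m (v - w) := by
  have hwm : w m = 0 := by
    by_contra h
    exact (hw.2 m (Finsupp.mem_support_iff.mpr h)).2.not_gt hlt
  refine ⟨by simpa [hwm] using hv.1, fun μ hμ => ?_⟩
  rcases Finset.mem_union.mp (Finsupp.support_sub hμ) with h | h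
  · exact hv.2 μ h
  · exact ⟨(hw.2 μ h).1, (hw.2 μ h).2.trans hlt.le⟩

def RaisesLeading (T : HN n →ₗ[ℂ] HN n) (j : ℕ) (e : Fin n → ℕ) : Prop :=
  ∀ ⦃d m v⦄, HasLeading d m v → HasLeading (d + j) (m + e) (T v)

lemma raisesLeading_one : RaisesLeading (1 : HN n →ₗ[ℂ] HN n) 0 0 := fun d m v h => by simpa using h

lemma RaisesLeading.mul {S T : HN n →ₗ[ℂ] HN n} {j j' : ℕ} {e e' : Fin n → ℕ}
    (hS : RaisesLeading S j e) (hT : RaisesLeading T j' e') : RaisesLeading (S * T) (j' + j) (e' + e) := fun d m v h => by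
  simpa only [Module.End.mul_apply, ← add_assoc] using hS (hT h)

lemma RaisesLeading.pow {T : HN n →ₗ[ℂ] HN n} {e : Fin n → ℕ} (hT : RaisesLeading T 1 e) :
    ∀ j, RaisesLeading (T ^ j) j (j • e)
  | 0 => by simpa using raisesLeading_one
  | j + 1 => by
    rw [pow_succ', succ_nsmul]
    exact hT.mul (hT.pow j)

lemma RaisesLeading.list_ofFn_prod :
    ∀ {k : ℕ} {T : Fin k → HN n →ₗ[ℂ] HN n} {J : Fin k → ℕ} {E : Fin k → Fin n → ℕ},
      (∀ i, RaisesLeading (T i) (J i) (E i)) →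
        RaisesLeading (List.ofFn T).prod (∑ i, J i) (∑ i, E i)
  | 0, _, _, _, _ => by simpa using raisesLeading_one
  | k + 1, T, J, E, h => by
    rw [List.ofFn_succ, List.prod_cons, Fin.sum_univ_succ, Fin.sum_univ_succ, add_comm (J 0),
      add_comm (E 0)]
    exact (h 0).mul (RaisesLeading.list_ofFn_prod fun i => h i.succ)

lemma raisesLeading_raise (i : Fin n) : RaisesLeading (raise i) 1 (Pi.single i 1) := by
  intro d m v hv
  refine ⟨?_, fun μ hμ => ?_⟩
  · rw [raise_apply_add_single]
    exact mul_ne_zero (Complex.ofReal_ne_zero.mpr (Real.sqrt_pos.mpr (by positivity)).ne') hv.1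
  · obtain ⟨ν, hν, rfl⟩ := raise_support i v μ hμ
    obtain ⟨hdeg, hle⟩ := hv.2 ν hν
    refine ⟨by simp [Finset.sum_add_distrib, hdeg], ?_⟩
    rw [toLex_add, toLex_add]
    exact add_le_add hle le_rfl

def leadingIndex (jv : Fin (n - 1) → ℕ) : Fin n → ℕ :=
  ∑ k, jv k • Pi.single (pos1 k) 1

lemma leadingIndex_apply_pos1 (jv : Fin (n - 1) → ℕ) (k : Fin (n - 1)) :
    leadingIndex jv (pos1 k) = jv k := by
  simp [leadingIndex, Finset.sum_apply, Pi.single_apply, pos1_injective.eq_iff]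

lemma leadingIndex_injective : Injective (leadingIndex (n := n)) := fun a b h =>
  funext fun k => by rw [← leadingIndex_apply_pos1 a k, h, leadingIndex_apply_pos1]

lemma leadingIndex_comp_pos1 {m : Fin n → ℕ} (h : ∀ i ∉ Set.range pos1, m i = 0) :
    leadingIndex (m ∘ pos1) = m := by
  funext i
  by_cases hi : i ∈ Set.range pos1
  · obtain ⟨k, rfl⟩ := hi
    exact leadingIndex_apply_pos1 _ k
  · rw [h i hi]
    simp only [leadingIndex, Finset.sum_apply, Pi.smul_apply, Pi.single_apply, smul_eq_mul]
    exact Finset.sum_eq_zero fun k _ => by rw [if_neg fun hk => hi ⟨k, hk.symm⟩, mul_zero]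

lemma span_hN_eq_supported (p : (Fin n → ℕ) → Prop) :
    Submodule.span ℂ {x : HN n | ∃ m, p m ∧ x = hN m} = Finsupp.supported ℂ ℂ {m | p m} := by
  rw [Finsupp.supported_eq_span_single]
  congr 1
  ext x
  simp [hN, eq_comm]

instance (k N : ℕ) : Fintype {jv : Fin k → ℕ // ∑ i, jv i = N} :=
  Fintype.ofEquiv _ (Sym.equivNatSumOfFintype (Fin k) N)

lemma card_sum_eq_choose (k N : ℕ) :
    Fintype.card {jv : Fin k → ℕ // ∑ i, jv i = N} = (k + N - 1).choose N := by
  rw [← Fintype.card_congr (Sym.equivNatSumOfFintype (Fin k) N), Sym.card_sym_eq_choose,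
    Fintype.card_fin]

def lowestWeightSpace (q : ℝ) (γ : Fin n → ℝ) (N : ℕ) : Submodule ℂ (HN n) :=
  LinearMap.ker (ΔNaMinus q γ) ⊓ Finsupp.supported ℂ ℂ {m | ∑ i, m i = N}

section PositiveParameters

variable {q : ℝ} (hq0 : 0 < q) (hq1 : q < 1) {γ : Fin n → ℝ} (hγ : ∀ i, 0 < γ i)
include hq0 hq1 hγ

lemma deltaCoeff_pos (i : Fin n) : 0 < deltaCoeff q γ i := by
  have := sqrt_qnum_pos hq0 hq1 (hγ i)
  unfold deltaCoeff
  positivity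

lemma ladderCoeff₁_pos (k : Fin (n - 1)) : 0 < ladderCoeff₁ q γ k := by
  have := sqrt_qnum_pos hq0 hq1 (hγ (pos1 k))
  have := sqrt_qnum_pos hq0 hq1 (hγ (pos2 k))
  unfold ladderCoeff₁
  positivity

lemma ladderCoeff₂_pos (k : Fin (n - 1)) : 0 < ladderCoeff₂ q γ k := by
  have := sqrt_qnum_pos hq0 hq1 (hγ (pos1 k))
  have := sqrt_qnum_pos hq0 hq1 (hγ (pos2 k))
  unfold ladderCoeff₂
  positivity

lemma deltaCoeff_mul_ladderCoeff (k : Fin (n - 1)) :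
    deltaCoeff q γ (pos1 k) * ladderCoeff₁ q γ k =
      deltaCoeff q γ (pos2 k) * ladderCoeff₂ q γ k := by
  have h₁ := (sqrt_qnum_pos hq0 hq1 (hγ (pos1 k))).ne'
  have h₂ := (sqrt_qnum_pos hq0 hq1 (hγ (pos2 k))).ne'
  unfold deltaCoeff ladderCoeff₁ ladderCoeff₂
  rw [Iio_pos2, Ioi_pos1, Finset.sum_insert (by simp), Finset.sum_insert (by simp),
    add_div, neg_add, add_div, Real.rpow_add hq0, Real.rpow_add hq0]
  field_simp

lemma commute_ΔNaMinus_ON (k : Fin (n - 1)) : Commute (ΔNaMinus q γ) (ON q γ k) := by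
  refine LinearMap.ext fun x => ?_
  simp only [Module.End.mul_apply, ΔNaMinus_eq_sum, LinearMap.sum_apply, LinearMap.smul_apply,
    map_sum, map_smul, lower_ON, smul_add, Finset.sum_add_distrib, smul_smul, ← Finset.sum_smul,
    mul_sub, mul_ite, mul_zero, Finset.sum_sub_distrib, Finset.sum_ite_eq', Finset.mem_univ,
    if_true]
  rw [← Complex.ofReal_mul, ← Complex.ofReal_mul, deltaCoeff_mul_ladderCoeff hq0 hq1 hγ, sub_self,
    zero_smul, add_zero]

lemma ΔNaMinus_Omono_vacuum (jv : Fin (n - 1) → ℕ) :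
    ΔNaMinus q γ (Omono q γ jv (hN fun _ => 0)) = 0 := by
  have hcomm : Commute (ΔNaMinus q γ) (Omono q γ jv) :=
    Commute.list_prod_right _ _ fun T hT => by
      obtain ⟨k, rfl⟩ := List.mem_ofFn.mp hT
      exact (commute_ΔNaMinus_ON hq0 hq1 hγ k).pow_right _
  rw [← Module.End.mul_apply, hcomm.eq, Module.End.mul_apply, ΔNaMinus_vacuum, map_zero]

lemma raisesLeading_ON (k : Fin (n - 1)) : RaisesLeading (ON q γ k) 1 (Pi.single (pos1 k) 1) := by
  intro d m v hv
  have hlt : toLex (m + Pi.single (pos2 k) 1) < toLex (m + Pi.single (pos1 k) 1) := by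
    rw [toLex_add, toLex_add]
    exact add_lt_add_right (toLex_single_lt_single (pos1_lt_pos2 k)) _
  rw [ON_eq, LinearMap.sub_apply, LinearMap.smul_apply, LinearMap.smul_apply]
  have ha : (ladderCoeff₁ q γ k : ℂ) ≠ 0 := by exact_mod_cast (ladderCoeff₁_pos hq0 hq1 hγ k).ne'
  have hb : (ladderCoeff₂ q γ k : ℂ) ≠ 0 := by exact_mod_cast (ladderCoeff₂_pos hq0 hq1 hγ k).ne'
  exact ((raisesLeading_raise _ hv).smul ha).sub_of_lt ((raisesLeading_raise _ hv).smul hb) hlt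

lemma hasLeading_Omono (jv : Fin (n - 1) → ℕ) :
    HasLeading (∑ k, jv k) (leadingIndex jv) (Omono q γ jv (hN fun _ => 0)) := by
  have hvac : HasLeading 0 0 (hN fun _ => 0 : HN n) :=
    ⟨by simp [hN, Pi.zero_def], fun μ hμ => by simp_all [hN, Pi.zero_def]⟩
  simpa [Omono, leadingIndex] using
    RaisesLeading.list_ofFn_prod (fun k => (raisesLeading_ON hq0 hq1 hγ k).pow (jv k)) hvac

lemma linearIndependent_Omono (N : ℕ) :
    LinearIndependent ℂ fun jv : {jv : Fin (n - 1) → ℕ // ∑ k, jv k = N} =>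
      Omono q γ jv.1 (hN fun _ => 0) :=
  linearIndependent_of_leading (fun jv => leadingIndex jv.1) toLex
    (toLex.injective.comp (leadingIndex_injective.comp Subtype.val_injective))
    (fun jv => (hasLeading_Omono hq0 hq1 hγ jv.1).1)
    (fun jv μ hμ => ((hasLeading_Omono hq0 hq1 hγ jv.1).2 μ hμ).2)

lemma Omono_mem_lowestWeightSpace {N : ℕ} {jv : Fin (n - 1) → ℕ} (hjv : ∑ k, jv k = N) :
    Omono q γ jv (hN fun _ => 0) ∈ lowestWeightSpace q γ N :=
  ⟨ΔNaMinus_Omono_vacuum hq0 hq1 hγ jv, fun μ hμ =>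
    ((hasLeading_Omono hq0 hq1 hγ jv).2 μ hμ).1.trans hjv⟩

lemma eq_zero_of_mem_lowestWeightSpace (hn : 0 < n) {N : ℕ} {f : HN n}
    (hf : f ∈ lowestWeightSpace q γ N)
    (h : ∀ jv : Fin (n - 1) → ℕ, ∑ k, jv k = N → f (leadingIndex jv) = 0) : f = 0 := by
  obtain ⟨hker, hsupp⟩ := Submodule.mem_inf.mp hf
  refine eq_zero_of_ΔNaMinus_eq_zero (i := ⟨n - 1, by omega⟩)
    (deltaCoeff_pos hq0 hq1 hγ _).ne' hker fun m hm => ?_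
  have hoff : ∀ i ∉ Set.range pos1, m i = 0 := fun i hi => by
    have : i = ⟨n - 1, by omega⟩ := Fin.ext <| by
      by_contra hne
      exact hi ⟨⟨i, by simp only at hne; omega⟩, rfl⟩
    rwa [this]
  by_cases hdeg : ∑ i, m i = N
  · have hsum : ∑ k, (m ∘ pos1) k = N :=
      hdeg ▸ Fintype.sum_of_injective pos1 pos1_injective _ _ hoff fun _ => rfl
    simpa [leadingIndex_comp_pos1 hoff] using h _ hsum
  · exact Finsupp.notMem_support_iff.mp fun hm' => hdeg (hsupp hm')

lemma lowestWeightSpace_eq_span (hn : 0 < n) (N : ℕ) :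
    lowestWeightSpace q γ N = Submodule.span ℂ (Set.range
      fun jv : {jv : Fin (n - 1) → ℕ // ∑ k, jv k = N} => Omono q γ jv.1 (hN fun _ => 0)) := by
  let restrict : lowestWeightSpace q γ N →ₗ[ℂ] ({jv : Fin (n - 1) → ℕ // ∑ k, jv k = N} → ℂ) :=
    (LinearMap.pi fun jv => Finsupp.lapply (leadingIndex jv.1)) ∘ₗ Submodule.subtype _
  have hinj : Injective restrict := fun f g hfg => Subtype.ext <| sub_eq_zero.mp <|
    eq_zero_of_mem_lowestWeightSpace hq0 hq1 hγ hn (sub_mem f.2 g.2) fun jv hjv => by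
      simpa [sub_eq_zero, restrict] using congrFun hfg ⟨jv, hjv⟩
  have := Module.Finite.of_injective restrict hinj
  refine (Submodule.eq_of_le_of_finrank_le ?_ ?_).symm
  · exact Submodule.span_le.mpr <| Set.range_subset_iff.mpr fun jv =>
      Omono_mem_lowestWeightSpace hq0 hq1 hγ jv.2
  · rw [finrank_span_eq_card (linearIndependent_Omono hq0 hq1 hγ N)]
    simpa using LinearMap.finrank_le_finrank_of_injective hinj

lemma finrank_lowestWeightSpace (hn : 0 < n) (N : ℕ) :
    Module.finrank ℂ (lowestWeightSpace q γ N) = (n - 1 + N - 1).choose N := by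
  rw [lowestWeightSpace_eq_span hq0 hq1 hγ hn, finrank_span_eq_card
    (linearIndependent_Omono hq0 hq1 hγ N), card_sum_eq_choose]

end PositiveParameters

end LowestWeight

open LowestWeight

theorem stmt12_general (n N : ℕ) (hn : 2 ≤ n) (q : ℝ) (γ : Fin n → ℝ)
    (hq0 : 0 < q) (hq1 : q < 1) (hγ : ∀ i, 0 < γ i) :
    LinearMap.ker (ΔNaMinus q γ) ⊓
        Submodule.span ℂ {x : HN n | ∃ m : Fin n → ℕ, ∑ i, m i = N ∧ x = hN m} =
      Submodule.span ℂ
        {x : HN n | ∃ jv : Fin (n - 1) → ℕ, ∑ k, jv k = N ∧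
          x = Omono q γ jv (hN fun _ => 0)} ∧
    Module.finrank ℂ
        ↥(LinearMap.ker (ΔNaMinus q γ) ⊓
          Submodule.span ℂ {x : HN n | ∃ m : Fin n → ℕ, ∑ i, m i = N ∧ x = hN m}) =
      (n + N - 2).choose (n - 2) := by
  have hrange : {x : HN n | ∃ jv : Fin (n - 1) → ℕ, ∑ k, jv k = N ∧
      x = Omono q γ jv (hN fun _ => 0)} =
      Set.range fun jv : {jv : Fin (n - 1) → ℕ // ∑ k, jv k = N} =>
        Omono q γ jv.1 (hN fun _ => 0) :=
    Set.ext fun _ => ⟨fun ⟨jv, hjv, hx⟩ => ⟨⟨jv, hjv⟩, hx.symm⟩,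
      fun ⟨jv, hx⟩ => ⟨jv.1, jv.2, hx.symm⟩⟩
  rw [span_hN_eq_supported, hrange]
  refine ⟨lowestWeightSpace_eq_span hq0 hq1 hγ (by omega) N, ?_⟩
  rw [show _ ⊓ _ = lowestWeightSpace q γ N from rfl,
    finrank_lowestWeightSpace hq0 hq1 hγ (by omega),
    show n - 1 + N - 1 = n - 2 + N by omega, show n + N - 2 = n - 2 + N by omega,
    Nat.choose_symm_add]

/-- the lowest weight space of level `N`,
`ker(Δ^{(n)}a⁻) ∩ span{h_{m₁} ⊗ ⋯ ⊗ h_{m_n} : Σ mᵢ = N}`, equals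
`span{O₁^{j₁} O₂^{j₂} ⋯ O_{n−1}^{j_{n−1}} v₀ : Σ jᵢ = N}`, and its dimension is
`binom(n+N−2, n−2)`. -/
theorem stmt12 (n N : ℕ) (hn : 2 ≤ n) (q : ℝ) (γ : Fin n → ℝ) (c : Fin n → ℝ)
    (hq0 : 0 < q) (hq1 : q < 1) (hγ : ∀ i, 0 < γ i) :
    LinearMap.ker (ΔNaMinus q γ) ⊓
        Submodule.span ℂ {x : HN n | ∃ m : Fin n → ℕ, ∑ i, m i = N ∧ x = hN m} =
      Submodule.span ℂ
        {x : HN n | ∃ jv : Fin (n - 1) → ℕ, ∑ k, jv k = N ∧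
          x = Omono q γ jv (hN fun _ => 0)} ∧
    Module.finrank ℂ
        ↥(LinearMap.ker (ΔNaMinus q γ) ⊓
          Submodule.span ℂ {x : HN n | ∃ m : Fin n → ℕ, ∑ i, m i = N ∧ x = hN m}) =
      (n + N - 2).choose (n - 2) :=
  stmt12_general n N hn q γ hq0 hq1 hγ
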